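/- arXiv:2109.00734 — 6 statements merged into one kernel-verified Lean document; each statement's English description precedes it below -/
import Mathlib

section
/- For every integer k ≥ 2 and every simple graph G on k vertices, either G or its complement contains a trail with k vertices. (Equivalently, the diagonal Ramsey number of trails with k vertices satisfies R(T_k, T_k) ≤ k.) -/
/-!
Fix three hubs `z₁ z₂ z₃`. By pigeonhole every other vertex `c` sends two edges of the same
colour to the hubs, and in that colour the path `zᵢ - c - zⱼ` links two hubs; each hub-hub edge
is a link in its own colour. The links of one colour form a loopless multigraph on three
vertices, which has an Euler trail, and this lifts to a trail of the graph because distinct links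
share no edge. Both colours together use `3 + 2 (n - 3) = 2 n - 3` edges, so one of the two
trails has at least `n - 1` edges.
-/

/-- A graph `G` contains a trail with `k` vertices (counted with multiplicity),
i.e., a walk of length `k - 1` whose edges are pairwise distinct. -/
def HasTrailWithVertices {V : Type*} (G : SimpleGraph V) (k : ℕ) : Prop :=
  ∃ (u v : V) (p : G.Walk u v), p.IsTrail ∧ p.length + 1 = k

theorem SimpleGraph.Walk.IsTrail.take {V : Type*} {G : SimpleGraph V} {u v : V}
    {w : G.Walk u v} (hw : w.IsTrail) (n : ℕ) : (w.take n).IsTrail := by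
  rw [isTrail_def, edges_take]
  exact hw.edges_nodup.sublist (List.take_sublist _ _)

namespace RamseyTrail

open SimpleGraph List

variable {V α : Type*}

lemma hasTrailWithVertices_of_isTrail {H : SimpleGraph V} {x y : V} {w : H.Walk x y}
    (hw : w.IsTrail) {n : ℕ} (hn : n ≤ w.length) : HasTrailWithVertices H (n + 1) :=
  ⟨x, _, w.take n, hw.take n, by rw [Walk.take_length, min_eq_left hn]⟩

/- A route from `x` is a list of moves `(y, a)`: go to the hub `y` along the link labelled `a`.
`routeLinks` records the links used, with their ends as an unordered pair. -/
def routeLinks : V → List (V × α) → List (Sym2 V × α)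
  | _, [] => []
  | x, (y, a) :: l => (s(x, y), a) :: routeLinks y l

def routeEnd : V → List (V × α) → V
  | x, [] => x
  | _, (y, _) :: l => routeEnd y l

lemma routeLinks_append (x : V) (l₁ l₂ : List (V × α)) :
    routeLinks x (l₁ ++ l₂) = routeLinks x l₁ ++ routeLinks (routeEnd x l₁) l₂ := by
  induction l₁ generalizing x with
  | nil => rfl
  | cons p l ih => simp [routeLinks, routeEnd, ih]

lemma routeEnd_append (x : V) (l₁ l₂ : List (V × α)) :
    routeEnd x (l₁ ++ l₂) = routeEnd (routeEnd x l₁) l₂ := by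
  induction l₁ generalizing x with
  | nil => rfl
  | cons p l ih => simp [routeEnd, ih]

def zigzag (x y : V) : List α → List (V × α)
  | [] => []
  | a :: L => (y, a) :: zigzag y x L

lemma routeLinks_zigzag (x y : V) (L : List α) :
    routeLinks x (zigzag x y L) = L.map (s(x, y), ·) := by
  induction L generalizing x y with
  | nil => rfl
  | cons a L ih => simp [zigzag, routeLinks, ih, Sym2.eq_swap]

lemma routeEnd_zigzag (x y : V) (L : List α) :
    routeEnd x (zigzag x y L) = if Even L.length then x else y := by
  induction L generalizing x y with
  | nil => rfl
  | cons a L ih =>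
    by_cases h : Even L.length <;> simp [zigzag, routeEnd, ih, h, Nat.even_add_one]

def rounds (p q r : V) : List α → List α → List α → List (V × α)
  | c :: C, a :: A, b :: B => (q, c) :: (r, a) :: (p, b) :: rounds p q r C A B
  | _, _, _ => []

lemma routeEnd_rounds (p q r : V) (C A B : List α) : routeEnd p (rounds p q r C A B) = p := by
  induction A generalizing B C with
  | nil => cases C <;> rfl
  | cons a A ih =>
    rcases C with _ | ⟨c, C⟩ <;> rcases B with _ | ⟨b, B⟩ <;> simp [rounds, routeEnd, ih]

lemma routeLinks_rounds_perm (p q r : V) {C A B : List α} (hB : A.length ≤ B.length)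
    (hC : A.length ≤ C.length) :
    routeLinks p (rounds p q r C A B) ~ (C.take A.length).map (s(p, q), ·) ++
      A.map (s(q, r), ·) ++ (B.take A.length).map (s(r, p), ·) := by
  induction A generalizing B C with
  | nil => cases C <;> simp [rounds, routeLinks]
  | cons a A ih =>
    obtain _ | ⟨c, C⟩ := C; · simp at hC
    obtain _ | ⟨b, B⟩ := B; · simp at hB
    refine (((ih (by simpa using hB) (by simpa using hC)).cons _).cons _).cons _ |>.trans ?_
    simp only [List.length_cons, List.take_succ_cons, List.map_cons, cons_append, append_assoc,
      perm_cons]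
    refine (Perm.cons _ ?_).trans perm_middle.symm
    rw [← append_assoc, ← append_assoc]
    exact perm_middle.symm

/- Zigzag through the part of `C` not used below so as to end at `p`, go round the triangle once
for each label of `A`, then zigzag through the rest of `B`. -/
lemma exists_route_of_shortest (p q r : V) {A B C : List α} (hB : A.length ≤ B.length)
    (hC : A.length ≤ C.length) :
    ∃ s l, routeLinks s l ~ C.map (s(p, q), ·) ++ A.map (s(q, r), ·) ++ B.map (s(r, p), ·) := by
  obtain ⟨x, y, hxy, hend⟩ : ∃ x y : V, s(x, y) = s(p, q) ∧
      routeEnd x (zigzag x y (C.drop A.length)) = p := by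
    by_cases h : Even (C.drop A.length).length
    · exact ⟨p, q, rfl, by rw [routeEnd_zigzag, if_pos h]⟩
    · exact ⟨q, p, Sym2.eq_swap, by rw [routeEnd_zigzag, if_neg h]⟩
  refine ⟨x, zigzag x y (C.drop A.length) ++ rounds p q r C A B ++
    zigzag p r (B.drop A.length), ?_⟩
  rw [routeLinks_append, routeLinks_append, routeEnd_append, hend, routeEnd_rounds,
    routeLinks_zigzag, routeLinks_zigzag, hxy, Sym2.eq_swap (a := p) (b := r)]
  have hsplit (L : List α) (e : Sym2 V) :
      L.map (e, ·) = (L.take A.length).map (e, ·) ++ (L.drop A.length).map (e, ·) := by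
    rw [← map_append, take_append_drop]
  rw [hsplit C, hsplit B]
  refine ((routeLinks_rounds_perm p q r hB hC).append_left _).append_right _ |>.trans ?_
  simpa only [append_assoc] using perm_append_comm.append_right _

lemma exists_route_of_bundles (p q r : V) (A B C : List α) :
    ∃ s l, routeLinks s l ~ C.map (s(p, q), ·) ++ A.map (s(q, r), ·) ++ B.map (s(r, p), ·) := by
  wlog h : A.length ≤ B.length ∧ A.length ≤ C.length generalizing p q r A B C
  · by_cases hBC : B.length ≤ C.length
    · obtain ⟨s, l, hl⟩ := this q r p B C A (by omega)
      exact ⟨s, l, hl.trans (perm_append_comm.trans (by rw [append_assoc]))⟩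
    · obtain ⟨s, l, hl⟩ := this r p q C A B (by omega)
      exact ⟨s, l, hl.trans (by rw [append_assoc]; exact perm_append_comm)⟩
  exact exists_route_of_shortest p q r h.1 h.2

lemma map_snd_map_of_forall_fst_eq {β γ : Type*} {e : β} {W : List (β × γ)}
    (h : ∀ u ∈ W, u.1 = e) : (W.map Prod.snd).map (e, ·) = W := by
  rw [List.map_map]
  conv_rhs => rw [← map_id W]
  exact map_congr_left fun u hu => by simp [← h u hu]

theorem exists_route_of_forall_mem_sides {p q r : V} (U : List (Sym2 V × α))
    (hU : ∀ u ∈ U, u.1 = s(p, q) ∨ u.1 = s(q, r) ∨ u.1 = s(r, p)) :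
    ∃ s l, routeLinks s l ~ U := by
  classical
  let P (e : Sym2 V) (u : Sym2 V × α) : Bool := u.1 = e
  let U' := U.filter (!P s(p, q) ·)
  have hsplit :
      U.filter (P s(p, q)) ++ (U'.filter (P s(q, r)) ++ U'.filter (!P s(q, r) ·)) ~ U :=
    ((filter_append_perm _ _).append_left _).trans (filter_append_perm _ _)
  have hfst {W : List (Sym2 V × α)} {Q : Sym2 V × α → Bool} {e : Sym2 V}
      (h : ∀ u ∈ W, Q u → u.1 = e) : ∀ u ∈ W.filter Q, u.1 = e := by
    simpa using h
  obtain ⟨s, l, hl⟩ := exists_route_of_bundles p q r ((U'.filter (P s(q, r))).map Prod.snd)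
    ((U'.filter (!P s(q, r) ·)).map Prod.snd) ((U.filter (P s(p, q))).map Prod.snd)
  refine ⟨s, l, hl.trans ?_⟩
  rwa [map_snd_map_of_forall_fst_eq (hfst fun _ _ => by simp [P]),
    map_snd_map_of_forall_fst_eq (hfst fun _ _ => by simp [P]),
    map_snd_map_of_forall_fst_eq (hfst fun u hu h => ?_), append_assoc]
  simp only [U', P, mem_filter, Bool.not_eq_true', decide_eq_false_iff_not] at hu h
  exact (hU u hu.1).resolve_left hu.2 |>.resolve_left h

/- A link labelled `none` is the edge between its ends, one labelled `some c` is the path of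
length two through the connector `c`. -/
def LinkAdj (H : SimpleGraph V) : Sym2 V × Option V → Prop
  | (e, none) => e ∈ H.edgeSet
  | (e, some c) => ∀ x ∈ e, H.Adj x c

def linkLength : Sym2 V × Option V → ℕ
  | (_, none) => 1
  | (_, some _) => 2

def routeEdges : V → List (V × Option V) → List (Sym2 V)
  | _, [] => []
  | x, (y, none) :: l => s(x, y) :: routeEdges y l
  | x, (y, some c) :: l => s(x, c) :: s(c, y) :: routeEdges y l

lemma exists_walk_edges_eq_routeEdges {H : SimpleGraph V} (x : V) (l : List (V × Option V))
    (hl : ∀ u ∈ routeLinks x l, LinkAdj H u) :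
    ∃ w : H.Walk x (routeEnd x l), w.edges = routeEdges x l := by
  induction l generalizing x with
  | nil => exact ⟨.nil, rfl⟩
  | cons st l ih =>
    obtain ⟨y, o⟩ := st
    obtain ⟨w, hw⟩ := ih y fun u hu => hl u (mem_cons_of_mem _ hu)
    have hxy : LinkAdj H (s(x, y), o) := hl _ mem_cons_self
    show ∃ w : H.Walk x (routeEnd y l), w.edges = routeEdges x ((y, o) :: l)
    obtain _ | c := o
    · exact ⟨.cons (show H.Adj x y from hxy) w, by rw [Walk.edges_cons, hw]; rfl⟩
    · refine ⟨.cons (hxy x (Sym2.mem_mk_left x y)) (.cons (hxy y (Sym2.mem_mk_right x y)).symm w),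
        ?_⟩
      rw [Walk.edges_cons, Walk.edges_cons, hw]; rfl

lemma length_routeEdges (x : V) (l : List (V × Option V)) :
    (routeEdges x l).length = ((routeLinks x l).map linkLength).sum := by
  induction l generalizing x with
  | nil => rfl
  | cons st l ih =>
    obtain ⟨y, _ | c⟩ := st <;> simp [routeEdges, routeLinks, linkLength, ih] <;> omega

lemma mem_routeEdges {x : V} {l : List (V × Option V)} {e : Sym2 V}
    (he : e ∈ routeEdges x l) :
    (e, none) ∈ routeLinks x l ∨ ∃ u ∈ routeLinks x l, ∃ c ∈ u.2, ∃ z ∈ u.1, e = s(z, c) := by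
  induction l generalizing x with
  | nil => simp [routeEdges] at he
  | cons st l ih =>
    obtain ⟨y, _ | c⟩ := st
    · simp only [routeEdges, mem_cons] at he
      rcases he with rfl | he
      · exact .inl mem_cons_self
      · rcases ih he with h | ⟨u, hu, h⟩
        · exact .inl (mem_cons_of_mem _ h)
        · exact .inr ⟨u, mem_cons_of_mem _ hu, h⟩
    · simp only [routeEdges, mem_cons] at he
      rcases he with rfl | rfl | he
      · exact .inr ⟨_, mem_cons_self, c, rfl, x, Sym2.mem_mk_left x y, rfl⟩
      · exact .inr ⟨_, mem_cons_self, c, rfl, y, Sym2.mem_mk_right x y, Sym2.eq_swap⟩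
      · rcases ih he with h | ⟨u, hu, h⟩
        · exact .inl (mem_cons_of_mem _ h)
        · exact .inr ⟨u, mem_cons_of_mem _ hu, h⟩

structure LinksSeparated (Z : Set V) (U : List (Sym2 V × Option V)) : Prop where
  ends_mem : ∀ u ∈ U, ∀ x ∈ u.1, x ∈ Z
  not_isDiag : ∀ u ∈ U, ¬u.1.IsDiag
  connector_notMem : ∀ u ∈ U, ∀ c ∈ u.2, c ∉ Z
  nodup : U.Nodup
  nodup_connectors : (U.filterMap Prod.snd).Nodup

lemma LinksSeparated.sublist {Z : Set V} {U U' : List (Sym2 V × Option V)}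
    (h : LinksSeparated Z U) (hU : U' <+ U) : LinksSeparated Z U' where
  ends_mem u hu := h.ends_mem u (hU.subset hu)
  not_isDiag u hu := h.not_isDiag u (hU.subset hu)
  connector_notMem u hu := h.connector_notMem u (hU.subset hu)
  nodup := h.nodup.sublist hU
  nodup_connectors := h.nodup_connectors.sublist (hU.filterMap _)

lemma LinksSeparated.perm {Z : Set V} {U U' : List (Sym2 V × Option V)}
    (h : LinksSeparated Z U) (hU : U ~ U') : LinksSeparated Z U' where
  ends_mem u hu := h.ends_mem u (hU.mem_iff.2 hu)
  not_isDiag u hu := h.not_isDiag u (hU.mem_iff.2 hu)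
  connector_notMem u hu := h.connector_notMem u (hU.mem_iff.2 hu)
  nodup := hU.nodup_iff.1 h.nodup
  nodup_connectors := (hU.filterMap _).nodup_iff.1 h.nodup_connectors

lemma nodup_routeEdges {Z : Set V} {x : V} {l : List (V × Option V)}
    (h : LinksSeparated Z (routeLinks x l)) : (routeEdges x l).Nodup := by
  induction l generalizing x with
  | nil => simp [routeEdges]
  | cons st l ih =>
    obtain ⟨y, _ | c⟩ := st
    · simp only [routeEdges, nodup_cons]
      refine ⟨fun he => ?_, ih (h.sublist (sublist_cons_self _ _))⟩
      rcases mem_routeEdges he with hmem | ⟨u, hu, c, hc, z, -, hxy⟩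
      · exact (nodup_cons.1 h.nodup).1 hmem
      · refine h.connector_notMem u (mem_cons_of_mem _ hu) c hc
          (h.ends_mem _ mem_cons_self c ?_)
        simp [hxy]
    · have hc : c ∉ Z := h.connector_notMem _ mem_cons_self c rfl
      have hc' : c ∉ (routeLinks y l).filterMap Prod.snd :=
        (nodup_cons.1 (by simpa [routeLinks] using h.nodup_connectors)).1
      have hfresh : ∀ e ∈ routeEdges y l, c ∉ e := by
        intro e he hce
        rcases mem_routeEdges he with hmem | ⟨u, hu, c', hc'', z, hz, rfl⟩
        · exact hc (h.ends_mem _ (mem_cons_of_mem _ hmem) c hce)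
        · rcases Sym2.mem_iff.1 hce with rfl | rfl
          · exact hc (h.ends_mem u (mem_cons_of_mem _ hu) _ hz)
          · exact hc' (mem_filterMap.2 ⟨u, hu, hc''⟩)
      simp only [routeEdges, nodup_cons, mem_cons]
      refine ⟨?_, ⟨fun he => hfresh _ he (Sym2.mem_mk_left _ _),
        ih (h.sublist (sublist_cons_self _ _))⟩⟩
      rintro (heq | he)
      · rcases Sym2.eq_iff.1 heq with ⟨rfl, -⟩ | ⟨rfl, -⟩
        · exact hc (h.ends_mem _ mem_cons_self x (Sym2.mem_mk_left _ _))
        · exact h.not_isDiag _ mem_cons_self (Sym2.mk_isDiag_iff.2 rfl)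
      · exact hfresh _ he (Sym2.mem_mk_right _ _)

theorem exists_isTrail_of_forall_mem_sides (H : SimpleGraph V) {Z : Set V} {p q r : V}
    {U : List (Sym2 V × Option V)}
    (hsides : ∀ u ∈ U, u.1 = s(p, q) ∨ u.1 = s(q, r) ∨ u.1 = s(r, p))
    (hadj : ∀ u ∈ U, LinkAdj H u) (hsep : LinksSeparated Z U) :
    ∃ (x y : V) (w : H.Walk x y), w.IsTrail ∧ w.length = (U.map linkLength).sum := by
  obtain ⟨s, l, hl⟩ := exists_route_of_forall_mem_sides U hsides
  obtain ⟨w, hw⟩ := exists_walk_edges_eq_routeEdges s l fun u hu => hadj u (hl.mem_iff.1 hu)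
  refine ⟨s, _, w, ?_, ?_⟩
  · rw [Walk.isTrail_def, hw]
    exact nodup_routeEdges (hsep.perm hl.symm)
  · rw [← Walk.length_edges, hw, length_routeEdges, (hl.map _).sum_eq]

lemma linkAdj_or_linkAdj_compl (G : SimpleGraph V) {x y c : V} (hxy : G.Adj x c ↔ G.Adj y c)
    (hx : x ≠ c) (hy : y ≠ c) : LinkAdj G (s(x, y), some c) ∨ LinkAdj Gᶜ (s(x, y), some c) := by
  by_cases h : G.Adj x c
  · exact .inl <| by simpa [LinkAdj, h] using hxy.1 h
  · exact .inr <| by simpa [LinkAdj, compl_adj, h, hx, hy] using mt hxy.2 h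

section Hubs

variable (G : SimpleGraph V) [DecidableRel G.Adj] (z₁ z₂ z₃ : V)

/- By pigeonhole, two of the three edges from `c` to the hubs have the same colour. -/
def side (c : V) : Sym2 V :=
  if G.Adj z₁ c ↔ G.Adj z₂ c then s(z₁, z₂)
  else if G.Adj z₂ c ↔ G.Adj z₃ c then s(z₂, z₃) else s(z₃, z₁)

variable [Fintype V] [DecidableEq V]

noncomputable def hubLinks : List (Sym2 V × Option V) :=
  [(s(z₁, z₂), none), (s(z₂, z₃), none), (s(z₃, z₁), none)] ++
    (Finset.univ \ {z₁, z₂, z₃}).toList.map fun c => (side G z₁ z₂ z₃ c, some c)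

variable {z₁ z₂ z₃}

lemma fst_mem_hubLinks {u : Sym2 V × Option V} (hu : u ∈ hubLinks G z₁ z₂ z₃) :
    u.1 = s(z₁, z₂) ∨ u.1 = s(z₂, z₃) ∨ u.1 = s(z₃, z₁) := by
  simp only [hubLinks, mem_append, mem_cons, mem_map, Finset.mem_toList] at hu
  rcases hu with (rfl | rfl | rfl | hu) | ⟨c, -, rfl⟩
  · simp
  · simp
  · simp
  · simp at hu
  · unfold side; split_ifs <;> simp

lemma linkAdj_hubLinks (h₁₂ : z₁ ≠ z₂) (h₂₃ : z₂ ≠ z₃) (h₃₁ : z₃ ≠ z₁)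
    {u : Sym2 V × Option V} (hu : u ∈ hubLinks G z₁ z₂ z₃) : LinkAdj G u ∨ LinkAdj Gᶜ u := by
  simp only [hubLinks, mem_append, mem_cons, mem_map, Finset.mem_toList, Finset.mem_sdiff,
    Finset.mem_insert, Finset.mem_singleton, not_or] at hu
  have direct (x y : V) (h : x ≠ y) :
      LinkAdj G (s(x, y), none) ∨ LinkAdj Gᶜ (s(x, y), none) := by
    simp [LinkAdj, compl_adj, h, em]
  rcases hu with (rfl | rfl | rfl | hu) | ⟨c, ⟨-, h₁, h₂, h₃⟩, rfl⟩
  · exact direct _ _ h₁₂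
  · exact direct _ _ h₂₃
  · exact direct _ _ h₃₁
  · simp at hu
  · unfold side
    split_ifs with h h'
    · exact linkAdj_or_linkAdj_compl G h (Ne.symm h₁) (Ne.symm h₂)
    · exact linkAdj_or_linkAdj_compl G h' (Ne.symm h₂) (Ne.symm h₃)
    · exact linkAdj_or_linkAdj_compl G (by tauto) (Ne.symm h₃) (Ne.symm h₁)

lemma linksSeparated_hubLinks (h₁₂ : z₁ ≠ z₂) (h₂₃ : z₂ ≠ z₃) (h₃₁ : z₃ ≠ z₁) :
    LinksSeparated {z₁, z₂, z₃} (hubLinks G z₁ z₂ z₃) where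
  ends_mem u hu := by
    rcases fst_mem_hubLinks G hu with h | h | h <;> simp [h]
  not_isDiag u hu := by
    rcases fst_mem_hubLinks G hu with h | h | h <;> simp [h, h₁₂, h₂₃, h₃₁]
  connector_notMem u hu c hc := by
    simp only [hubLinks, mem_append, mem_cons, mem_map, Finset.mem_toList,
      Finset.mem_sdiff] at hu
    rcases hu with (rfl | rfl | rfl | hu) | ⟨c', ⟨-, hc'⟩, rfl⟩
    · simp at hc
    · simp at hc
    · simp at hc
    · simp at hu
    · simp only [Option.mem_def, Option.some.injEq] at hc
      simpa [← hc] using hc'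
  nodup := by
    refine nodup_append.2 ⟨by simp [h₁₂, h₂₃, h₃₁, h₁₂.symm, h₃₁.symm],
      (Finset.nodup_toList _).map fun a b h => Option.some_injective _ (congrArg Prod.snd h), ?_⟩
    intro u hu v hv huv
    obtain ⟨c, -, rfl⟩ := mem_map.1 hv
    simp only [mem_cons, not_mem_nil, or_false] at hu
    rcases hu with rfl | rfl | rfl <;> simp at huv
  nodup_connectors := by
    simpa [hubLinks, filterMap_map] using Finset.nodup_toList _

lemma sum_linkLength_hubLinks (h₁₂ : z₁ ≠ z₂) (h₂₃ : z₂ ≠ z₃) (h₃₁ : z₃ ≠ z₁) :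
    ((hubLinks G z₁ z₂ z₃).map linkLength).sum = 2 * Fintype.card V - 3 := by
  have hZ : ({z₁, z₂, z₃} : Finset V).card = 3 :=
    Finset.card_eq_three.2 ⟨_, _, _, h₁₂, h₃₁.symm, h₂₃, rfl⟩
  have h3 : 3 ≤ Fintype.card V := hZ ▸ Finset.card_le_univ _
  simp [hubLinks, linkLength, Function.comp_def, Finset.card_univ_sdiff, hZ]
  omega

theorem hasTrailWithVertices_card_or_compl_of_hubs (h₁₂ : z₁ ≠ z₂) (h₂₃ : z₂ ≠ z₃)
    (h₃₁ : z₃ ≠ z₁) :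
    HasTrailWithVertices G (Fintype.card V) ∨ HasTrailWithVertices Gᶜ (Fintype.card V) := by
  classical
  set U := hubLinks G z₁ z₂ z₃
  have hsep := linksSeparated_hubLinks G h₁₂ h₂₃ h₃₁
  obtain ⟨_, _, p, hp, hpU⟩ := exists_isTrail_of_forall_mem_sides G
    (U := U.filter (decide <| LinkAdj G ·))
    (fun u hu => fst_mem_hubLinks G (mem_filter.1 hu).1)
    (fun u hu => by simpa using (mem_filter.1 hu).2) (hsep.sublist filter_sublist)
  obtain ⟨_, _, q, hq, hqU⟩ := exists_isTrail_of_forall_mem_sides Gᶜ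
    (U := U.filter (decide <| ¬LinkAdj G ·))
    (fun u hu => fst_mem_hubLinks G (mem_filter.1 hu).1)
    (fun u hu => by
      simp only [mem_filter, decide_eq_true_eq] at hu
      exact (linkAdj_hubLinks G h₁₂ h₂₃ h₃₁ hu.1).resolve_left hu.2)
    (hsep.sublist filter_sublist)
  have hsum : p.length + q.length = 2 * Fintype.card V - 3 := by
    rw [hpU, hqU, sum_map_filter_add_sum_map_filter_not, sum_linkLength_hubLinks G h₁₂ h₂₃ h₃₁]
  obtain ⟨n, hn⟩ : ∃ n, Fintype.card V = n + 1 :=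
    ⟨_, (Nat.succ_pred_eq_of_pos (Fintype.card_pos_iff.2 ⟨z₁⟩)).symm⟩
  rw [hn] at hsum ⊢
  rcases le_or_gt n p.length with h | h
  · exact .inl (hasTrailWithVertices_of_isTrail hp h)
  · exact .inr (hasTrailWithVertices_of_isTrail hq (by omega))

end Hubs

theorem hasTrailWithVertices_card_or_compl [Fintype V] (G : SimpleGraph V)
    (hV : 2 ≤ Fintype.card V) :
    HasTrailWithVertices G (Fintype.card V) ∨ HasTrailWithVertices Gᶜ (Fintype.card V) := by
  classical
  rcases hV.eq_or_lt with hV | hV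
  · obtain ⟨x, y, hxy⟩ := (Fintype.one_lt_card_iff (α := V)).1 (by omega)
    rw [← hV]
    by_cases h : G.Adj x y
    · exact .inl (hasTrailWithVertices_of_isTrail (w := .cons h .nil) (by simp) le_rfl)
    · have h' : Gᶜ.Adj x y := (compl_adj G x y).2 ⟨hxy, h⟩
      exact .inr (hasTrailWithVertices_of_isTrail (w := .cons h' .nil) (by simp) le_rfl)
  · obtain ⟨z₁, z₂, z₃, h₁₂, h₁₃, h₂₃⟩ := Fintype.two_lt_card_iff.1 hV
    exact hasTrailWithVertices_card_or_compl_of_hubs G h₁₂ h₂₃ h₁₃.symm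

end RamseyTrail

open RamseyTrail in
/-- For every integer `k ≥ 2` and every simple graph `G` on `k` vertices,
either `G` or its complement contains a trail with `k` vertices. -/
theorem ramsey_trail_upper_bound (k : ℕ) (hk : 2 ≤ k) (G : SimpleGraph (Fin k)) :
    HasTrailWithVertices G k ∨ HasTrailWithVertices Gᶜ k := by
  simpa using hasTrailWithVertices_card_or_compl G (by simpa using hk)
end

section
/- For every integer k ≥ 7 and every natural number n with n < (1 + √(16k − 7))/2, there exists a simple graph G on n vertices such that neither G nor its complement contains a trail with k vertices. (Equivalently, R(T_k, T_k) ≥ ⌈(1 + √(16k − 7))/2⌉ for k ≥ 7.) -/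
open Finset Fintype

def completeBipartiteOddCount (a b : ℕ) : ℕ :=
  (if Odd b then a else 0) + (if Odd a then b else 0)

namespace SimpleGraph

variable {V : Type*} [Fintype V]

namespace Walk

variable [DecidableEq V] {G : SimpleGraph V}

theorem IsEulerian.card_edgeFinset_eq_length [DecidableRel G.Adj] {u v : V} {p : G.Walk u v}
    (hp : p.IsEulerian) : #G.edgeFinset = p.length := by
  rw [← length_edges]
  convert (congrArg card hp.edgesFinset_eq).symm
  rfl

theorem IsTrail.two_mul_length_add_card_odd_degree_le [DecidableRel G.Adj] {u v : V}
    {p : G.Walk u v} (hp : p.IsTrail) :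
    2 * p.length + #{x | Odd (G.degree x)} ≤ 2 * #G.edgeFinset + 2 := by
  classical
  set H : SimpleGraph V := fromEdgeSet p.edgeSet
  have hHG : H ≤ G := fun a b h => by simpa using p.edges_subset_edgeSet h.1
  have hpH : ∀ e ∈ p.edges, e ∈ H.edgeSet := fun e he => by
    rw [edgeSet_fromEdgeSet]
    exact ⟨he, G.not_isDiag_of_mem_edgeSet (p.edges_subset_edgeSet he)⟩
  have hq : (p.transfer H hpH).IsEulerian := by
    refine ((isTrail_def _).2 ?_).isEulerian_of_forall_mem fun e he => ?_
    · rw [edges_transfer]; exact hp.edges_nodup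
    · rw [edges_transfer]; exact ((edgeSet_fromEdgeSet _).subset he).1
  set S : Finset V := ({x | Odd (G.degree x)} : Finset V) \ {u, v}
  have hstep : ∀ x, H.degree x + (if x ∈ S then 1 else 0) ≤ G.degree x := by
    intro x
    split_ifs with hx
    · simp only [S, mem_sdiff, mem_filter, mem_univ, true_and, mem_insert, mem_singleton,
        not_or] at hx
      have hev : Even (H.degree x) := hq.even_degree_iff.2 fun _ => hx.2
      exact (degree_le_of_le hHG).lt_of_ne fun h => Nat.not_even_iff_odd.2 hx.1 (h ▸ hev)
    · exact degree_le_of_le hHG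
  calc 2 * p.length + #{x | Odd (G.degree x)}
      ≤ 2 * p.length + (#S + 2) := by
        grw [card_le_card_sdiff_add_card (t := {u, v}), card_le_two]
    _ = ∑ x, (H.degree x + if x ∈ S then 1 else 0) + 2 := by
        rw [← add_assoc, sum_add_distrib, sum_degrees_eq_twice_card_edges,
          hq.card_edgeFinset_eq_length, length_transfer, sum_boole, filter_mem_eq_inter,
          univ_inter, Nat.cast_id]
    _ ≤ 2 * #G.edgeFinset + 2 := by
        grw [sum_le_sum fun x _ => hstep x, sum_degrees_eq_twice_card_edges]

end Walk

theorem not_hasTrailWithVertices_of_lt [DecidableEq V] {G : SimpleGraph V} [DecidableRel G.Adj]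
    {k : ℕ} (h : 2 * #G.edgeFinset + 4 < 2 * k + max #{v | Odd (G.degree v)} 2) :
    ¬ HasTrailWithVertices G k := by
  rintro ⟨u, v, p, hp, rfl⟩
  have := hp.two_mul_length_add_card_odd_degree_le
  have := hp.length_le_card_edgeFinset
  omega

section Complement

variable [DecidableEq V] (G : SimpleGraph V) [DecidableRel G.Adj]

theorem card_edgeFinset_compl : #Gᶜ.edgeFinset = (card V).choose 2 - #G.edgeFinset := by
  rw [← card_edgeFinset_top_eq_card_choose_two, ← card_sdiff_of_subset (edgeFinset_mono le_top),
    ← edgeFinset_sdiff]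
  congr! 2

theorem odd_degree_compl_iff (v : V) :
    Odd (Gᶜ.degree v) ↔ (Odd (G.degree v) ↔ Odd (card V)) := by
  have := G.degree_lt_card_verts v
  simp only [degree_compl, Nat.odd_iff]
  omega

theorem card_odd_degree_compl :
    #{v | Odd (Gᶜ.degree v)} =
      if Even (card V) then card V - #{v | Odd (G.degree v)} else #{v | Odd (G.degree v)} := by
  split_ifs with hV
  · rw [← card_compl, compl_filter]
    congr; ext v; simp [odd_degree_compl_iff, Nat.not_odd_iff_even.2 hV]
  · congr; ext v; simp [odd_degree_compl_iff, Nat.not_even_iff_odd.1 hV]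

end Complement

section CompleteBipartite

variable [DecidableEq V] {s t : Finset V}

theorem degree_top_between_of_mem_left (hst : Disjoint s t) {v : V} (hv : v ∈ s) :
    ((⊤ : SimpleGraph V).between s t).degree v = #t := by
  rw [← card_neighborFinset_eq_degree,
    isBipartiteWith_neighborFinset (between_isBipartiteWith (disjoint_coe.2 hst)) hv]
  congr 1
  exact filter_true_of_mem fun w hw =>
    ⟨ne_of_mem_of_not_mem hv (Finset.disjoint_right.1 hst hw), .inl ⟨hv, hw⟩⟩

theorem degree_top_between_of_mem_right (hst : Disjoint s t) {v : V} (hv : v ∈ t) :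
    ((⊤ : SimpleGraph V).between s t).degree v = #s := by
  rw [← card_neighborFinset_eq_degree,
    isBipartiteWith_neighborFinset' (between_isBipartiteWith (disjoint_coe.2 hst)) hv]
  congr 1
  exact filter_true_of_mem fun w hw =>
    ⟨ne_of_mem_of_not_mem hw (Finset.disjoint_right.1 hst hv), .inl ⟨hw, hv⟩⟩

theorem degree_top_between_of_notMem {v : V} (hs : v ∉ s) (ht : v ∉ t) :
    ((⊤ : SimpleGraph V).between s t).degree v = 0 := by
  rw [← card_neighborFinset_eq_degree, card_eq_zero]
  ext w; simp [between_adj, hs, ht]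

theorem card_edgeFinset_top_between (hst : Disjoint s t) :
    #((⊤ : SimpleGraph V).between s t).edgeFinset = #s * #t := by
  rw [← isBipartiteWith_sum_degrees_eq_card_edges (between_isBipartiteWith (disjoint_coe.2 hst)),
    sum_congr rfl fun v hv => degree_top_between_of_mem_left hst hv, sum_const, smul_eq_mul]

theorem card_odd_degree_top_between (hst : Disjoint s t) :
    #{v | Odd (((⊤ : SimpleGraph V).between s t).degree v)} =
      completeBipartiteOddCount #s #t := by
  have : ({v | Odd (((⊤ : SimpleGraph V).between s t).degree v)} : Finset V) =
      {v ∈ s | Odd #t} ∪ {v ∈ t | Odd #s} := by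
    ext v
    simp only [mem_filter, mem_univ, true_and, mem_union]
    by_cases hs : v ∈ s
    · simp [hs, degree_top_between_of_mem_left hst hs, Finset.disjoint_left.1 hst hs]
    by_cases ht : v ∈ t
    · simp [hs, ht, degree_top_between_of_mem_right hst ht]
    · simp [hs, ht, degree_top_between_of_notMem hs ht]
  rw [this, card_union_of_disjoint (hst.mono (filter_subset _ _) (filter_subset _ _)),
    filter_const, filter_const, apply_ite card, apply_ite card, Finset.card_empty,
    completeBipartiteOddCount]

end CompleteBipartite

end SimpleGraph

theorem Finset.exists_disjoint_card_eq {α : Type*} [Fintype α] [DecidableEq α] {a b : ℕ}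
    (h : a + b ≤ Fintype.card α) : ∃ s t : Finset α, Disjoint s t ∧ #s = a ∧ #t = b := by
  obtain ⟨s, -, hs⟩ := exists_subset_card_eq (s := (univ : Finset α)) (n := a)
    (by rw [card_univ]; omega)
  obtain ⟨t, ht, htc⟩ := exists_subset_card_eq (s := sᶜ) (n := b) (by rw [card_compl]; omega)
  exact ⟨s, t, disjoint_of_subset_right ht disjoint_compl_right, hs, htc⟩

theorem Nat.two_mul_choose_two_add_self (n : ℕ) : 2 * n.choose 2 + n = n * n := by
  rw [Nat.choose_two_right, Nat.two_mul_div_two_of_even (Nat.even_mul_pred_self n)]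
  cases n <;> simp [Nat.mul_succ]

theorem choose_two_add_two_le_of_lt_sqrt {n k : ℕ} (hk : 1 ≤ k)
    (hn : (n : ℝ) < (1 + Real.sqrt (16 * k - 7)) / 2) : n.choose 2 + 2 ≤ 2 * k := by
  have h2C := Nat.two_mul_choose_two_add_self n
  rcases Nat.eq_zero_or_pos n with rfl | hn0
  · simp only [Nat.choose_zero_succ]; omega
  have h0 : (0 : ℝ) ≤ 2 * n - 1 := by
    have : (1 : ℝ) ≤ n := by exact_mod_cast hn0
    linarith
  have hsq := (Real.lt_sqrt h0).1 (by linarith)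
  have : 4 * (n * n) + 8 < 16 * k + 4 * n := by
    have : (4 * (n * n) + 8 : ℝ) < 16 * k + 4 * n := by nlinarith
    exact_mod_cast this
  omega

theorem exists_bipartite_part_sizes {n k : ℕ} (hk : 7 ≤ k) (hnk : n.choose 2 + 2 ≤ 2 * k) :
    ∃ a b, a + b ≤ n ∧
      2 * (a * b) + 4 < 2 * k + max (completeBipartiteOddCount a b) 2 ∧
      2 * (n.choose 2 - a * b) + 4 < 2 * k +
        max (if Even n then n - completeBipartiteOddCount a b
          else completeBipartiteOddCount a b) 2 := by
  have h2C := Nat.two_mul_choose_two_add_self n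
  rcases Nat.lt_or_ge n 2 with hn | hn
  · have hC : n.choose 2 = 0 := Nat.choose_eq_zero_of_lt hn
    refine ⟨0, 0, by omega, ?_, ?_⟩ <;> grw [← le_max_right] <;> omega
  obtain ⟨q, rfl | rfl | rfl | rfl⟩ :
      ∃ q, n = 4 * q + 4 ∨ n = 4 * q + 5 ∨ n = 4 * q + 2 ∨ n = 4 * q + 3 := by
    rcases Nat.lt_or_ge (n % 4) 2 with h | h
    · exact ⟨n / 4 - 1, by omega⟩
    · exact ⟨n / 4, by omega⟩
  -- two odd parts, making every non-isolated vertex odd, except for `n ≡ 1 mod 4`, where odd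
  -- parts would be too unbalanced
  on_goal 1 => refine ⟨2 * q + 3, 2 * q + 1, ?_⟩
  on_goal 2 => refine ⟨2 * q + 1, 2 * q + 4, ?_⟩
  on_goal 3 => refine ⟨2 * q + 1, 2 * q + 1, ?_⟩
  on_goal 4 => refine ⟨2 * q + 1, 2 * q + 1, ?_⟩
  -- `omega` sees `q ^ 2` as an atom; the small cases `q = 0` need it tied to `q`
  all_goals
    have hq2 : q ^ 2 = 0 ↔ q = 0 := pow_eq_zero_iff two_ne_zero
    simp only [completeBipartiteOddCount, Nat.odd_add, Nat.even_add_one, even_two,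
      Even.mul_right, Even.add_one, Nat.not_odd_iff_even, not_true_eq_false, not_false_eq_true,
      iff_true, iff_false, ↓reduceIte]
    ring_nf at *
    omega

open SimpleGraph in
/-- For every integer `k ≥ 7` and every `n` with `n < (1 + √(16k − 7))/2`, there is a
simple graph `G` on `n` vertices such that neither `G` nor its complement contains a
trail with `k` vertices, i.e., `R(T_k, T_k) ≥ ⌈(1 + √(16k − 7))/2⌉`. -/
theorem ramsey_trail_lower_bound (k : ℕ) (hk : 7 ≤ k) (n : ℕ)
    (hn : (n : ℝ) < (1 + Real.sqrt (16 * (k : ℝ) - 7)) / 2) :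
    ∃ G : SimpleGraph (Fin n),
      ¬ HasTrailWithVertices G k ∧ ¬ HasTrailWithVertices Gᶜ k := by
  obtain ⟨a, b, hab, hG, hGc⟩ :=
    exists_bipartite_part_sizes hk (choose_two_add_two_le_of_lt_sqrt (by omega) hn)
  obtain ⟨s, t, hst, rfl, rfl⟩ := exists_disjoint_card_eq (α := Fin n) (by simpa using hab)
  refine ⟨(⊤ : SimpleGraph (Fin n)).between s t, not_hasTrailWithVertices_of_lt ?_,
    not_hasTrailWithVertices_of_lt ?_⟩
  · rwa [card_edgeFinset_top_between hst, card_odd_degree_top_between hst]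
  · rwa [card_edgeFinset_compl, card_odd_degree_compl, card_edgeFinset_top_between hst,
      card_odd_degree_top_between hst, Fintype.card_fin]
end

section
/- There exists a simple graph G on 5 vertices such that neither G nor its complement contains a trail with 7 vertices. (Together with the upper-bound direction, this shows R(T_7, T_7) = R(T_8, T_8) = 6.) -/
open Finset SimpleGraph

theorem not_hasTrailWithVertices_of_card_edgeFinset_lt {V : Type*} (G : SimpleGraph V)
    [Fintype G.edgeSet] {k : ℕ} (h : #G.edgeFinset + 1 < k) : ¬ HasTrailWithVertices G k :=
  fun ⟨_, _, _, hp, hk⟩ => by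
    have := hp.length_le_card_edgeFinset
    omega

/- The 5-cycle and its complement, the pentagram, each have only 5 edges,
while a trail with 7 vertices uses 6 distinct edges. -/
/-- There is a simple graph `G` on 5 vertices such that neither `G` nor its
complement contains a trail with 7 vertices. -/
theorem no_trail7_on_five_vertices :
    ∃ G : SimpleGraph (Fin 5),
      ¬ HasTrailWithVertices G 7 ∧ ¬ HasTrailWithVertices Gᶜ 7 :=
  ⟨cycleGraph 5, not_hasTrailWithVertices_of_card_edgeFinset_lt _ (by decide),
    not_hasTrailWithVertices_of_card_edgeFinset_lt _ (by decide)⟩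
end

section
/- There exists a simple graph G on 6 vertices such that neither G nor its complement contains a trail with 9 vertices. (Together with the upper-bound direction, this shows R(T_9, T_9) = R(T_10, T_10) = 7.) -/
open Finset

namespace SimpleGraph.Walk

variable {V : Type*} {G : SimpleGraph V} {u v : V} {p : G.Walk u v}

theorem IsTrail.countP_edges_eq_degree [Fintype V] [DecidableEq V] [DecidableRel G.Adj]
    (hp : p.IsTrail) {x : V} (hx : G.incidenceSet x ⊆ {e | e ∈ p.edges}) :
    p.edges.countP (x ∈ ·) = G.degree x := by
  rw [List.countP_eq_length_filter, ← card_incidenceFinset_eq_degree,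
    G.incidenceFinset_eq_filter x, ← List.toFinset_card_of_nodup (hp.edges_nodup.filter _),
    List.toFinset_filter]
  congr 1
  ext e
  simp only [mem_filter, List.mem_toFinset, mem_edgeFinset, decide_eq_true_eq]
  exact ⟨fun h => ⟨p.edges_subset_edgeSet h.1, h.2⟩, fun h => ⟨hx ⟨h.1, h.2⟩, h.2⟩⟩

theorem IsTrail.eq_or_eq_of_odd_degree [Fintype V] [DecidableEq V] [DecidableRel G.Adj]
    (hp : p.IsTrail) {x : V} (hx : G.incidenceSet x ⊆ {e | e ∈ p.edges})
    (hodd : Odd (G.degree x)) : x = u ∨ x = v := by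
  have := hp.even_countP_edges_iff x
  rw [hp.countP_edges_eq_degree hx, ← Nat.not_odd_iff_even] at this
  tauto

/-- A vertex of odd degree that is not an end of the trail touches a missed edge, and a missed edge
touches at most two vertices. -/
theorem IsTrail.card_le_of_forall_odd_degree [Fintype V] [DecidableRel G.Adj]
    (hp : p.IsTrail) (hodd : ∀ x, Odd (G.degree x)) :
    Fintype.card V ≤ 2 * (#G.edgeFinset - p.length) + 2 := by
  classical
  set missed := G.edgeFinset \ p.edges.toFinset
  have h_missed : #missed = #G.edgeFinset - p.length := by
    rw [card_sdiff_of_subset, List.toFinset_card_of_nodup hp.edges_nodup, length_edges]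
    intro e he
    exact mem_edgeFinset.mpr (p.edges_subset_edgeSet (List.mem_toFinset.mp he))
  set touched := missed.biUnion Sym2.toFinset
  have h_touched : #touched ≤ 2 * #missed := by
    rw [mul_comm]
    refine card_biUnion_le_card_mul _ _ _ fun e _ => ?_
    rw [Sym2.card_toFinset]
    split_ifs <;> omega
  have h_rest : univ \ touched ⊆ {u, v} := by
    intro x hx
    have hcover : G.incidenceSet x ⊆ {e | e ∈ p.edges} := by
      intro e he
      by_contra hne
      refine (mem_sdiff.mp hx).2 (mem_biUnion.mpr ⟨e, ?_, Sym2.mem_toFinset.mpr he.2⟩)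
      exact mem_sdiff.mpr ⟨mem_edgeFinset.mpr he.1, fun h => hne (List.mem_toFinset.mp h)⟩
    simpa using hp.eq_or_eq_of_odd_degree hcover (hodd x)
  calc Fintype.card V = #touched + #(univ \ touched) := by
        rw [card_sdiff_of_subset (subset_univ _), card_univ]
        have := card_le_univ touched
        omega
    _ ≤ 2 * #missed + #({u, v} : Finset V) := add_le_add h_touched (card_le_card h_rest)
    _ ≤ 2 * (#G.edgeFinset - p.length) + 2 := by
        rw [h_missed]
        exact add_le_add_right card_le_two _

end SimpleGraph.Walk

def parityGraph : SimpleGraph (Fin 6) where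
  Adj a b := a.val % 2 ≠ b.val % 2
  symm := ⟨fun _ _ h => h.symm⟩
  loopless := ⟨fun _ h => h rfl⟩

instance : DecidableRel parityGraph.Adj := fun a b => by unfold parityGraph; infer_instance

theorem parityGraph_degree (x : Fin 6) : parityGraph.degree x = 3 := by
  revert x; decide

theorem card_edgeFinset_parityGraph : #parityGraph.edgeFinset = 9 := by decide

theorem card_edgeFinset_compl_parityGraph : #parityGraphᶜ.edgeFinset = 6 := by decide

/-- There is a simple graph `G` on 6 vertices such that neither `G` nor its
complement contains a trail with 9 vertices. -/
theorem no_trail9_on_six_vertices :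
    ∃ G : SimpleGraph (Fin 6),
      ¬ HasTrailWithVertices G 9 ∧ ¬ HasTrailWithVertices Gᶜ 9 := by
  refine ⟨parityGraph, ?_, ?_⟩
  · rintro ⟨u, v, p, hp, hlen⟩
    have := hp.card_le_of_forall_odd_degree fun x => by
      rw [parityGraph_degree]; decide
    rw [card_edgeFinset_parityGraph, Fintype.card_fin] at this
    omega
  · rintro ⟨u, v, p, hp, hlen⟩
    have := hp.length_le_card_edgeFinset
    rw [card_edgeFinset_compl_parityGraph] at this
    omega
end

section
/- Let k ≥ 7 be an integer and let n be a natural number such that the complete graph on n vertices has at most 2k − 2 edges (i.e., n(n−1)/2 ≤ 2k − 2). Then there exists a simple graph G on n vertices such that neither G nor its complement contains a trail with k vertices. -/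
/-!
Every vertex other than the two ends meets an even number of the edges of a trail, so a trail
has at most `1 + ∑ ⌊deg x / 2⌋` edges, the sum running over the vertices it visits. Take `G` to
be the complete bipartite graph `K_{a,b}` with `a + b = n`, whose complement is two disjoint
cliques: a trail in `K_{a,b}` has at most `1 + a⌊b/2⌋ + b⌊a/2⌋` edges and one in the cliques at
most `1 + m⌊(m-1)/2⌋` for `m ∈ {a, b}`. Parts of size about `n / 2`, odd where possible, keep
these below `k - 1` once `n(n-1)/2 ≤ 2k - 2`, except for `n = 7`, `k = 12`, where an explicit
graph works.
-/

open Finset SimpleGraph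

theorem List.sum_countP_mem_eq_two_mul_length {V : Type*} [Fintype V] [DecidableEq V] :
    ∀ l : List (Sym2 V), (∀ e ∈ l, ¬ e.IsDiag) → ∑ x, l.countP (x ∈ ·) = 2 * l.length
  | [], _ => by simp
  | e :: l, h => by
    have he : #{x | x ∈ e} = 2 := by
      rw [← Sym2.card_toFinset_of_not_isDiag e (h e List.mem_cons_self)]
      congr 1
      ext x
      simp
    have ih := sum_countP_mem_eq_two_mul_length l fun e' he' => h e' (List.mem_cons_of_mem _ he')
    simp only [List.countP_cons, sum_add_distrib, ih, decide_eq_true_eq, sum_boole, he,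
      List.length_cons, Nat.cast_id]
    ring

namespace SimpleGraph

namespace Walk

variable {V : Type*} {G : SimpleGraph V} {u v : V} {p : G.Walk u v}

theorem mem_support_of_mem_of_mem_edges {e : Sym2 V} {x : V} (he : e ∈ p.edges) (hx : x ∈ e) :
    x ∈ p.support := by
  induction e with
  | _ a b =>
    rcases Sym2.mem_iff.1 hx with rfl | rfl
    exacts [p.fst_mem_support_of_mem_edges he, p.snd_mem_support_of_mem_edges he]

variable [Fintype V] [DecidableEq V] [DecidableRel G.Adj]

theorem IsTrail.countP_edges_le_degree (hp : p.IsTrail) (x : V) :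
    p.edges.countP (x ∈ ·) ≤ G.degree x := by
  rw [List.countP_eq_length_filter, ← List.toFinset_card_of_nodup (hp.edges_nodup.filter _),
    ← card_incidenceFinset_eq_degree]
  refine card_le_card fun e he => ?_
  simp only [List.mem_toFinset, List.mem_filter, decide_eq_true_eq] at he
  exact (mem_incidenceFinset _ _ _).2 ⟨p.edges_subset_edgeSet he.1, he.2⟩

theorem IsTrail.countP_edges_le (hp : p.IsTrail) (x : V) :
    p.edges.countP (x ∈ ·) ≤
      2 * (G.degree x / 2) + if x ∈ ({u, v} : Finset V) then 1 else 0 := by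
  have hdeg := hp.countP_edges_le_degree x
  split_ifs with hx
  · omega
  · simp only [mem_insert, mem_singleton, not_or] at hx
    obtain ⟨m, hm⟩ := (hp.even_countP_edges_iff x).2 fun _ => hx
    omega

theorem IsTrail.length_le_sum_degree_div_two (hp : p.IsTrail) {S : Finset V}
    (hS : ∀ x ∈ p.support, x ∈ S) : p.length ≤ ∑ x ∈ S, G.degree x / 2 + 1 := by
  have hzero : ∀ x ∉ S, p.edges.countP (x ∈ ·) = 0 := fun x hx =>
    List.countP_eq_zero.2 fun e he hxe =>
      hx (hS x (mem_support_of_mem_of_mem_edges he (of_decide_eq_true hxe)))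
  have hends : ∑ x ∈ S, (if x ∈ ({u, v} : Finset V) then 1 else 0) ≤ 2 := by
    rw [sum_boole]
    exact (card_le_card fun x hx => (mem_filter.1 hx).2).trans card_le_two
  have hdouble := calc
    2 * p.length = ∑ x, p.edges.countP (x ∈ ·) := by
      rw [← p.length_edges, List.sum_countP_mem_eq_two_mul_length p.edges fun e he =>
        G.not_isDiag_of_mem_edgeSet (p.edges_subset_edgeSet he)]
    _ = ∑ x ∈ S, p.edges.countP (x ∈ ·) :=
      (sum_subset (subset_univ S) fun x _ hx => hzero x hx).symm
    _ ≤ ∑ x ∈ S, (2 * (G.degree x / 2) + if x ∈ ({u, v} : Finset V) then 1 else 0) :=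
      sum_le_sum fun x _ => hp.countP_edges_le x
    _ ≤ 2 * ∑ x ∈ S, G.degree x / 2 + 2 := by
      rw [sum_add_distrib, ← mul_sum]
      omega
  omega

end Walk

theorem not_hasTrailWithVertices_of_sum_degree_div_two {V : Type*} [Fintype V] [DecidableEq V]
    {G : SimpleGraph V} [DecidableRel G.Adj] {k : ℕ} (h : ∑ x, G.degree x / 2 + 2 < k) :
    ¬ HasTrailWithVertices G k := by
  rintro ⟨u, v, p, hp, rfl⟩
  have := hp.length_le_sum_degree_div_two fun x _ => mem_univ x
  omega

section CompleteMultipartite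

variable {V ι : Type*} (c : V → ι)

theorem Walk.apply_eq_of_mem_support_compl_comap_top {u v : V}
    (p : ((⊤ : SimpleGraph ι).comap c)ᶜ.Walk u v) : ∀ x ∈ p.support, c x = c u := by
  induction p with
  | nil => simp
  | cons h q ih =>
    simp only [Walk.support_cons, List.mem_cons, forall_eq_or_imp, true_and]
    intro x hx
    rw [ih x hx]
    simpa [eq_comm] using h.2

variable [Fintype V] [DecidableEq V] [DecidableEq ι]

theorem degree_comap_top (x : V) :
    ((⊤ : SimpleGraph ι).comap c).degree x = Fintype.card V - #{y | c y = c x} := by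
  rw [← card_neighborFinset_eq_degree, ← card_compl, compl_filter]
  congr 1
  ext y
  simp [eq_comm]

theorem degree_compl_comap_top (x : V) :
    ((⊤ : SimpleGraph ι).comap c)ᶜ.degree x = #{y | c y = c x} - 1 := by
  rw [← card_neighborFinset_eq_degree,
    ← card_erase_of_mem (s := {y | c y = c x}) (a := x) (by simp)]
  congr 1
  ext y
  simp [eq_comm, and_comm]

theorem not_hasTrailWithVertices_comap_top [Fintype ι] {k : ℕ}
    (h : ∑ i, #{x | c x = i} * ((Fintype.card V - #{x | c x = i}) / 2) + 2 < k) :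
    ¬ HasTrailWithVertices ((⊤ : SimpleGraph ι).comap c) k := by
  refine not_hasTrailWithVertices_of_sum_degree_div_two ?_
  rw [← sum_fiberwise univ c, sum_congr rfl fun i _ => sum_congr rfl fun x hx => by
    rw [degree_comap_top, (mem_filter.1 hx).2]]
  simpa only [sum_const, smul_eq_mul] using h

theorem not_hasTrailWithVertices_compl_comap_top {k : ℕ}
    (h : ∀ i, #{x | c x = i} * ((#{x | c x = i} - 1) / 2) + 2 < k) :
    ¬ HasTrailWithVertices ((⊤ : SimpleGraph ι).comap c)ᶜ k := by
  rintro ⟨u, v, p, hp, rfl⟩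
  have hlen := hp.length_le_sum_degree_div_two (S := {x | c x = c u}) fun x hx => by
    simpa using p.apply_eq_of_mem_support_compl_comap_top c x hx
  rw [sum_congr rfl fun x hx => by rw [degree_compl_comap_top, (mem_filter.1 hx).2],
    sum_const, smul_eq_mul] at hlen
  have := h (c u)
  omega

end CompleteMultipartite

-- No split into two cliques works for `n = 7`, `k = 12`. This is `K₄` on `{0, 1, 2, 3}` with the
-- paths `0 - 4 - 1` and `0 - 5 - 6 - 1` attached.
def exceptionalGraph : SimpleGraph (Fin 7) :=
  fromEdgeSet ↑({s(0, 1), s(0, 2), s(0, 3), s(1, 2), s(1, 3), s(2, 3), s(0, 4), s(4, 1), s(0, 5),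
    s(5, 6), s(6, 1)} : Finset (Sym2 (Fin 7)))

instance : DecidableRel exceptionalGraph.Adj := by
  unfold exceptionalGraph
  infer_instance

end SimpleGraph

theorem exists_part_sizes {n k : ℕ} (hk : 7 ≤ k) (hn : n * (n - 1) / 2 ≤ 2 * k - 2)
    (hne : ¬(n = 7 ∧ k = 12)) :
    ∃ a b, a + b = n ∧ a * ((a - 1) / 2) + 2 < k ∧ b * ((b - 1) / 2) + 2 < k ∧
      a * (b / 2) + b * (a / 2) + 2 < k := by
  replace hn : n * n + 4 ≤ 4 * k + n := by
    have heven := (Nat.even_mul_pred_self n).two_dvd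
    rw [Nat.mul_sub_one] at heven hn
    omega
  rcases le_or_gt n 7 with h7 | h7
  · interval_cases n
    · exact ⟨0, 0, by omega⟩
    · exact ⟨0, 1, by omega⟩
    · exact ⟨1, 1, by omega⟩
    · exact ⟨3, 0, by omega⟩
    · exact ⟨3, 1, by omega⟩
    · exact ⟨4, 1, by omega⟩
    · exact ⟨3, 3, by omega⟩
    · exact ⟨5, 2, by omega⟩
  obtain ⟨t, r, hr, rfl⟩ : ∃ t r, r < 4 ∧ n = 4 * t + 8 + r :=
    ⟨n / 4 - 2, n % 4, Nat.mod_lt n four_pos, by omega⟩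
  -- For odd `n` the parts `(n ± 3) / 2` beat `(n ± 1) / 2`, whose even part saves nothing
  -- in `⌊·/2⌋`.
  interval_cases r <;>
    [exists 2 * t + 5, 2 * t + 3; exists 2 * t + 6, 2 * t + 3;
      exists 2 * t + 5, 2 * t + 5; exists 2 * t + 7, 2 * t + 4] <;>
    simp only [Nat.add_one_sub_one, Nat.mul_add_div two_pos, Nat.reduceDiv] <;>
    split_ands <;> nlinarith

/-- Let `k ≥ 7` and let `n` be such that the complete graph on `n` vertices has at
most `2k − 2` edges. Then there is a simple graph `G` on `n` vertices such that
neither `G` nor its complement contains a trail with `k` vertices. -/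
theorem no_trail_of_few_edges (k n : ℕ) (hk : 7 ≤ k) (hn : n * (n - 1) / 2 ≤ 2 * k - 2) :
    ∃ G : SimpleGraph (Fin n),
      ¬ HasTrailWithVertices G k ∧ ¬ HasTrailWithVertices Gᶜ k := by
  by_cases hexc : n = 7 ∧ k = 12
  · obtain ⟨rfl, rfl⟩ := hexc
    exact ⟨exceptionalGraph, not_hasTrailWithVertices_of_sum_degree_div_two (by decide),
      not_hasTrailWithVertices_of_sum_degree_div_two (by decide)⟩
  obtain ⟨a, b, rfl, ha, hb, hab⟩ := exists_part_sizes hk hn hexc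
  obtain ⟨s, -, hs⟩ :=
    exists_subset_card_eq (s := (univ : Finset (Fin (a + b)))) (n := a) (by simp)
  have hsc : #{x | x ∉ s} = b := by simp [filter_not, card_univ_sdiff, hs]
  refine ⟨(⊤ : SimpleGraph Bool).comap fun x => decide (x ∈ s), ?_, ?_⟩
  · refine not_hasTrailWithVertices_comap_top _ ?_
    simpa [hs, hsc, Fintype.sum_bool, add_comm a b] using hab
  · refine not_hasTrailWithVertices_compl_comap_top _ ?_
    rintro (_ | _) <;> simpa [hs, hsc]
end

section
/- Let G be a bipartite simple graph with partite sets A and B (every edge of G joins a vertex of A with a vertex of B). If |A| = 3 and every vertex of B has degree exactly two in G, then G contains a trail with exactly 2|B| edges whose two endpoints both belong to A. -/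
/-!
Regard each `b ∈ B` as an edge joining its two neighbours in `A`; the required trail is an
Euler trail of this multigraph on three vertices. Add the vertices of `B` one at a time: a new
`b` with neighbours `u, v` is appended as the detour `u b v` to a trail ending at `u` or `v`
(reversing the trail if needed). Otherwise both ends of the trail are the third vertex `w` of
`A`; a nonempty closed trail at `w` passes through `u` or `v`, and can be rotated to start
there.
-/

open Finset

theorem Finset.eq_or_eq_or_eq_of_card_le_three {α : Type*} [DecidableEq α] {s : Finset α}
    {x y z w : α} (hs : #s ≤ 3) (hx : x ∈ s) (hy : y ∈ s) (hz : z ∈ s) (hxy : x ≠ y)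
    (hxz : x ≠ z) (hyz : y ≠ z) (hw : w ∈ s) : w = x ∨ w = y ∨ w = z := by
  have hsub : {x, y, z} ⊆ s := by simp [insert_subset_iff, hx, hy, hz]
  have hcard : #s ≤ #{x, y, z} := by rwa [card_eq_three.2 ⟨x, y, z, hxy, hxz, hyz, rfl⟩]
  rw [← eq_of_subset_of_card_le hsub hcard] at hw
  simpa using hw

namespace SimpleGraph

variable {V : Type*} {G : SimpleGraph V}

theorem Walk.IsTrail.concat_concat {a u b v : V} {p : G.Walk a u} (hp : p.IsTrail)
    (hb : b ∉ p.support) (hub : G.Adj u b) (hbv : G.Adj b v) (huv : u ≠ v) :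
    ((p.concat hub).concat hbv).IsTrail := by
  rw [← Walk.reverse_isTrail_iff]
  simp only [Walk.reverse_concat, Walk.isTrail_cons, Walk.edges_cons, List.mem_cons,
    Walk.edges_reverse, List.mem_reverse]
  refine ⟨⟨hp.reverse, fun h => hb (p.fst_mem_support_of_mem_edges h)⟩, ?_⟩
  rintro (h | h)
  · rcases Sym2.eq_iff.1 h with ⟨-, rfl⟩ | ⟨rfl, -⟩
    exacts [hub.ne rfl, huv rfl]
  · exact hb (p.snd_mem_support_of_mem_edges h)

theorem Walk.IsTrail.exists_mem_support_ne {A S : Finset V} {w : V}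
    {p : G.Walk w w} (hp : p.IsTrail) (hnil : ¬p.Nil)
    (hsupp : ∀ x ∈ p.support, x ∈ A ∨ x ∈ S) (hSA : ∀ b ∈ S, ∀ c, G.Adj b c → c ∈ A) :
    ∃ c ∈ A, c ≠ w ∧ c ∈ p.support := by
  cases p with
  | nil => exact absurd Walk.Nil.nil hnil
  | @cons _ b _ hwb q =>
    cases q with
    | nil => exact absurd hwb (G.loopless.irrefl _)
    | @cons _ c _ hbc r =>
      rcases hsupp b (by simp) with hbA | hbS
      · exact ⟨b, hbA, hwb.ne.symm, by simp⟩
      · refine ⟨c, hSA b hbS c hbc, ?_, by simp⟩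
        rintro rfl
        simp [Walk.isTrail_cons, Sym2.eq_swap] at hp

variable (G) in
/-- The vertex condition is the invariant that keeps every `b ∉ A ∪ S` off the trail, so that its
two edges are still unused. -/
def HasTrailThrough (A S : Finset V) (a₁ a₂ : V) : Prop :=
  ∃ p : G.Walk a₁ a₂, p.IsTrail ∧ p.length = 2 * #S ∧ ∀ x ∈ p.support, x ∈ A ∨ x ∈ S

namespace HasTrailThrough

variable {A S : Finset V} {a₁ a₂ : V}

theorem symm (h : G.HasTrailThrough A S a₁ a₂) : G.HasTrailThrough A S a₂ a₁ := by
  obtain ⟨p, hp, hlen, hsupp⟩ := h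
  exact ⟨p.reverse, hp.reverse, by rw [Walk.length_reverse, hlen],
    fun x hx => hsupp x (by rwa [Walk.support_reverse, List.mem_reverse] at hx)⟩

theorem insert [DecidableEq V] {u b v : V} (h : G.HasTrailThrough A S a₁ u)
    (hbA : b ∉ A) (hbS : b ∉ S) (hub : G.Adj u b) (hbv : G.Adj b v) (huv : u ≠ v)
    (hv : v ∈ A) : G.HasTrailThrough A (insert b S) a₁ v := by
  obtain ⟨p, hp, hlen, hsupp⟩ := h
  have hb : b ∉ p.support := fun hb => (hsupp b hb).elim hbA hbS
  refine ⟨(p.concat hub).concat hbv, hp.concat_concat hb hub hbv huv, ?_, ?_⟩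
  · rw [Walk.length_concat, Walk.length_concat, hlen, card_insert_of_notMem hbS]
    ring
  · intro x hx
    simp only [Walk.support_concat, List.mem_append, List.mem_singleton] at hx
    rcases hx with (hx | rfl) | rfl
    · exact (hsupp x hx).imp_right (mem_insert_of_mem ·)
    · exact .inr (mem_insert_self _ _)
    · exact .inl hv

theorem exists_ne_of_closed {w u : V} (h : G.HasTrailThrough A S w w) (hu : u ∈ A)
    (huw : u ≠ w) (hSA : ∀ b ∈ S, ∀ c, G.Adj b c → c ∈ A) :
    ∃ c ∈ A, c ≠ w ∧ G.HasTrailThrough A S c c := by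
  classical
  obtain ⟨p, hp, hlen, hsupp⟩ := h
  by_cases hnil : p.Nil
  · rw [Walk.length_eq_zero_iff.2 hnil] at hlen
    exact ⟨u, hu, huw, .nil, by simp, by simpa using hlen, by simp [hu]⟩
  obtain ⟨c, hcA, hcw, hc⟩ := hp.exists_mem_support_ne hnil hsupp hSA
  refine ⟨c, hcA, hcw, p.rotate c hc, hp.rotate hc, ?_,
    fun x hx => hsupp x ((p.mem_support_rotate_iff c hc).1 hx)⟩
  rw [← Walk.length_edges, (p.rotate_edges c hc).perm.length_eq, Walk.length_edges, hlen]

end HasTrailThrough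

theorem exists_hasTrailThrough {A S : Finset V} (hA₀ : A.Nonempty) (hA : #A ≤ 3)
    (hAS : Disjoint A S) (hSA : ∀ b ∈ S, ∀ c, G.Adj b c → c ∈ A)
    (hS : ∀ b ∈ S, ∃ u v, u ≠ v ∧ G.Adj b u ∧ G.Adj b v) :
    ∃ a₁ ∈ A, ∃ a₂ ∈ A, G.HasTrailThrough A S a₁ a₂ := by
  classical
  induction S using Finset.induction_on with
  | empty =>
    obtain ⟨a, ha⟩ := hA₀
    exact ⟨a, ha, a, ha, .nil, by simp, by simp, by simp [ha]⟩
  | insert b S hbS ih =>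
    have hSA' : ∀ b ∈ S, ∀ c, G.Adj b c → c ∈ A := fun b' hb' => hSA b' (mem_insert_of_mem hb')
    obtain ⟨a₁, ha₁, a₂, ha₂, h⟩ := ih (hAS.mono_right (subset_insert _ _)) hSA'
      fun b' hb' => hS b' (mem_insert_of_mem hb')
    obtain ⟨u, v, huv, hbu, hbv⟩ := hS b (mem_insert_self _ _)
    have hu : u ∈ A := hSA b (mem_insert_self _ _) u hbu
    have hv : v ∈ A := hSA b (mem_insert_self _ _) v hbv
    have hbA : b ∉ A := disjoint_right.1 hAS (mem_insert_self _ _)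
    have extend : ∀ a ∈ A, ∀ c, c = u ∨ c = v → G.HasTrailThrough A S a c →
        ∃ a₁ ∈ A, ∃ a₂ ∈ A, G.HasTrailThrough A (insert b S) a₁ a₂ := by
      rintro a ha c (rfl | rfl) h
      · exact ⟨a, ha, v, hv, h.insert hbA hbS hbu.symm hbv huv hv⟩
      · exact ⟨a, ha, u, hu, h.insert hbA hbS hbv.symm hbu huv.symm hu⟩
    by_cases h₂ : a₂ = u ∨ a₂ = v
    · exact extend a₁ ha₁ a₂ h₂ h
    by_cases h₁ : a₁ = u ∨ a₁ = v
    · exact extend a₂ ha₂ a₁ h₁ h.symm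
    push Not at h₁ h₂
    have hA' : ∀ x ∈ A, x = u ∨ x = v ∨ x = a₁ := fun x hx =>
      eq_or_eq_or_eq_of_card_le_three hA hu hv ha₁ huv h₁.1.symm h₁.2.symm hx
    obtain rfl : a₂ = a₁ := by simpa [h₂] using hA' a₂ ha₂
    obtain ⟨c, hcA, hca, hc⟩ := h.exists_ne_of_closed hu h₁.1.symm hSA'
    exact extend c hcA c (by simpa [hca] using hA' c hcA) hc

end SimpleGraph

open SimpleGraph in
theorem bipartite_trail_lemma_general {V : Type*} [Fintype V]
    (G : SimpleGraph V) [DecidableRel G.Adj] (A B : Finset V)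
    (hdisj : Disjoint A B)
    (hbip : ∀ u v : V, G.Adj u v → (u ∈ A ∧ v ∈ B) ∨ (u ∈ B ∧ v ∈ A))
    (hA : A.card = 3) (hdeg : ∀ b ∈ B, G.degree b = 2) :
    ∃ (a₁ : V) (_ : a₁ ∈ A) (a₂ : V) (_ : a₂ ∈ A) (p : G.Walk a₁ a₂),
      p.IsTrail ∧ p.length = 2 * B.card := by
  have hBA : ∀ b ∈ B, ∀ c, G.Adj b c → c ∈ A := fun b hb c hbc =>
    ((hbip b c hbc).resolve_left fun h => disjoint_left.1 hdisj h.1 hb).2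
  have hB : ∀ b ∈ B, ∃ u v, u ≠ v ∧ G.Adj b u ∧ G.Adj b v := by
    intro b hb
    have h2 : 1 < #(G.neighborFinset b) := by rw [card_neighborFinset_eq_degree, hdeg b hb]; simp
    obtain ⟨u, hu, v, hv, huv⟩ := one_lt_card.1 h2
    exact ⟨u, v, huv, (mem_neighborFinset _ _ _).1 hu, (mem_neighborFinset _ _ _).1 hv⟩
  obtain ⟨a₁, ha₁, a₂, ha₂, p, hp, hlen, -⟩ :=
    exists_hasTrailThrough (card_pos.1 (by omega)) hA.le hdisj hBA hB
  exact ⟨a₁, ha₁, a₂, ha₂, p, hp, hlen⟩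

/-- Let `G` be a bipartite simple graph with partite sets `A` and `B` (every edge joins
a vertex of `A` with a vertex of `B`). If `|A| = 3` and every vertex of `B` has degree
exactly two, then `G` contains a trail with exactly `2|B|` edges whose two endpoints
both belong to `A`. -/
theorem bipartite_trail_lemma {V : Type*} [Fintype V] [DecidableEq V]
    (G : SimpleGraph V) [DecidableRel G.Adj] (A B : Finset V)
    (hunion : A ∪ B = Finset.univ) (hdisj : Disjoint A B)
    (hbip : ∀ u v : V, G.Adj u v → (u ∈ A ∧ v ∈ B) ∨ (u ∈ B ∧ v ∈ A))
    (hA : A.card = 3) (hdeg : ∀ b ∈ B, G.degree b = 2) :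
    ∃ (a₁ : V) (_ : a₁ ∈ A) (a₂ : V) (_ : a₂ ∈ A) (p : G.Walk a₁ a₂),
      p.IsTrail ∧ p.length = 2 * B.card :=
  bipartite_trail_lemma_general G A B hdisj hbip hA hdeg
end
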